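/- Let J : ℝ³ → ℝ^{3×3} be given by J(x) = [[x₂, x₁, −1], [−x₂, −x₁, −1], [0, 0, −1]] (the Jacobian of the active constraints g₁ = x₁x₂ − x₃, g₂ = −x₁x₂ − x₃, g₃ = −x₃ at x* = (0,0,0)). Then there do NOT exist functions x ↦ U(x) ∈ ℝ^{3×3}, x ↦ Σ(x) ∈ ℝ^{3×3}, x ↦ V(x) ∈ ℝ^{3×3}, differentiable in a neighborhood of x* = 0, such that J(x) = U(x)Σ(x)V(x)ᵀ for all x in that neighborhood, Σ(x) is diagonal with diagonal entries σ₁(x), σ₂(x), σ₃(x) satisfying σ_i(x) = 0 whenever i exceeds the rank of J(x), and the columns of U(0) and the columns of V(0) are non-zero and pairwise orthogonal. (Note: rank J(0) = 1 and rank J(x) ≤ 2 for all x.) -/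

import Mathlib

/-!
Since `rank J(x) ≤ 2` everywhere and `rank J(0) = 1`, the decomposition reads
`J = σ₁ u₁ v₁ᵀ + σ₂ u₂ v₂ᵀ` near `0` with `σ₂(0) = 0`. The difference of the first two rows
of `J(x)` is `(2x₂, 2x₁, 0) = q₁ v₁ᵀ + q₂ v₂ᵀ` with `qₖ = (uₖ₁ - uₖ₂) σₖ`, and the rank-one
matrix `J(0) = σ₁(0) u₁(0) v₁(0)ᵀ` forces `q₁(0) = q₂(0) = 0` and `v₁(0) ∥ e₃`.
Differentiating at `0`, the first two coordinates of `(2x₂, 2x₁)` both have derivatives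
proportional to `dq₂(0)`, which is impossible since they are independent.
-/

open scoped BigOperators
open Matrix

noncomputable section

/-- The Jacobian of the active constraints `g₁ = x₁x₂ − x₃`, `g₂ = −x₁x₂ − x₃`,
`g₃ = −x₃` at the point `x`. -/
def J17 : (Fin 3 → ℝ) → Matrix (Fin 3) (Fin 3) ℝ :=
  fun x => !![x 1, x 0, -1; -(x 1), -(x 0), -1; 0, 0, -1]

lemma Matrix.rank_mul_le_inner {m n R : Type*} [Fintype n] [CommRing R] [StrongRankCondition R]
    {k : ℕ} (A : Matrix m (Fin k) R) (B : Matrix (Fin k) n R) : (A * B).rank ≤ k :=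
  (rank_mul_le_left A B).trans ((rank_le_card_width A).trans_eq (Fintype.card_fin k))

lemma Matrix.mul_mul_transpose_apply_of_isDiag {R : Type*} [CommRing R]
    {U S V : Matrix (Fin 3) (Fin 3) R} (hS : S.IsDiag) (hS₂ : S 2 2 = 0) (i j : Fin 3) :
    (U * S * Vᵀ) i j = U i 0 * S 0 0 * V j 0 + U i 1 * S 1 1 * V j 1 := by
  rw [← hS.diagonal_diag]
  simp [mul_apply, Fin.sum_univ_three, hS₂]

lemma J17_rank_le_two (x : Fin 3 → ℝ) : (J17 x).rank ≤ 2 := by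
  have h : J17 x = !![(1 : ℝ), -1; -1, -1; 0, -1] * !![x 1, x 0, 0; 0, 0, 1] := by
    ext i j
    fin_cases i <;> fin_cases j <;> simp [J17, mul_apply, Fin.sum_univ_two]
  exact h ▸ rank_mul_le_inner _ _

lemma J17_zero_rank_le_one : (J17 0).rank ≤ 1 := by
  have h : J17 0 = !![(-1 : ℝ); -1; -1] * !![(0 : ℝ), 0, 1] := by
    ext i j
    fin_cases i <;> fin_cases j <;> simp [J17, mul_apply]
  exact h ▸ rank_mul_le_inner _ _

lemma J17_row_sub_apply_zero (x : Fin 3 → ℝ) : J17 x 0 0 - J17 x 1 0 = 2 * x 1 := by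
  simp [J17]; ring

lemma J17_row_sub_apply_one (x : Fin 3 → ℝ) : J17 x 0 1 - J17 x 1 1 = 2 * x 0 := by
  simp [J17]; ring

lemma J17_zero_factors_of_eq_vecMulVec {u v : Fin 3 → ℝ} (h : ∀ i j, J17 0 i j = u i * v j) :
    v 0 = 0 ∧ v 1 = 0 ∧ u 0 = u 1 := by
  have h02 : u 0 * v 2 = -1 := by simpa [J17] using (h 0 2).symm
  have h12 : u 1 * v 2 = -1 := by simpa [J17] using (h 1 2).symm
  have hu : u 0 ≠ 0 := left_ne_zero_of_mul (by rw [h02]; norm_num)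
  have hv : v 2 ≠ 0 := right_ne_zero_of_mul (by rw [h02]; norm_num)
  refine ⟨?_, ?_, mul_right_cancel₀ hv (h02.trans h12.symm)⟩
  · exact (mul_eq_zero.mp (by simpa [J17] using (h 0 0).symm)).resolve_left hu
  · exact (mul_eq_zero.mp (by simpa [J17] using (h 0 1).symm)).resolve_left hu

lemma hasFDerivAt_mul_add_mul_of_eq_zero {E : Type*} [NormedAddCommGroup E] [NormedSpace ℝ E]
    {a₀ b₀ a₁ b₁ : E → ℝ} {x : E} (ha₀ : DifferentiableAt ℝ a₀ x) (hb₀ : DifferentiableAt ℝ b₀ x)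
    (ha₁ : DifferentiableAt ℝ a₁ x) (hb₁ : DifferentiableAt ℝ b₁ x)
    (ha₀x : a₀ x = 0) (hb₀x : b₀ x = 0) (ha₁x : a₁ x = 0) :
    HasFDerivAt (fun y => a₀ y * b₀ y + a₁ y * b₁ y) (b₁ x • fderiv ℝ a₁ x) x := by
  refine ((ha₀.hasFDerivAt.mul hb₀.hasFDerivAt).add
    (ha₁.hasFDerivAt.mul hb₁.hasFDerivAt)).congr_fderiv ?_
  simp [ha₀x, hb₀x, ha₁x]

lemma not_smul_proj_eq_smul_and_smul_proj_eq_smul {ι : Type*} [DecidableEq ι] {i j : ι}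
    (hij : i ≠ j) {r : ℝ} (hr : r ≠ 0) (L : (ι → ℝ) →L[ℝ] ℝ) (c d : ℝ) :
    ¬ (r • ContinuousLinearMap.proj i = c • L ∧ r • ContinuousLinearMap.proj j = d • L) := by
  rintro ⟨hi, hj⟩
  have hii : r = c * L (Pi.single i 1) := by simpa using congr($hi (Pi.single i 1))
  have hji : 0 = d * L (Pi.single i 1) := by simpa [hij] using congr($hj (Pi.single i 1))
  have hjj : r = d * L (Pi.single j 1) := by simpa using congr($hj (Pi.single j 1))
  exact hr (pow_eq_zero_iff two_ne_zero |>.mp (by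
    linear_combination r * hjj + L (Pi.single j 1) * d * hii - c * L (Pi.single j 1) * hji))

/-- the matrix function `J17` admits no smooth singular value decomposition
around the origin in the sense of Assumption 1 of the paper. -/
theorem stmt17 :
    ¬ ∃ (O : Set (Fin 3 → ℝ)) (U S V : (Fin 3 → ℝ) → Matrix (Fin 3) (Fin 3) ℝ),
      O ∈ nhds (0 : Fin 3 → ℝ) ∧
      (∀ i j : Fin 3, DifferentiableOn ℝ (fun x => U x i j) O) ∧
      (∀ i j : Fin 3, DifferentiableOn ℝ (fun x => S x i j) O) ∧
      (∀ i j : Fin 3, DifferentiableOn ℝ (fun x => V x i j) O) ∧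
      (∀ x ∈ O, J17 x = U x * S x * (V x)ᵀ) ∧
      (∀ x ∈ O, ∀ i j : Fin 3, i ≠ j → S x i j = 0) ∧
      (∀ x ∈ O, ∀ i : Fin 3, (J17 x).rank ≤ (i : ℕ) → S x i i = 0) ∧
      (∀ a : Fin 3, (fun i => U 0 i a) ≠ 0) ∧
      (∀ a b : Fin 3, a ≠ b → ∑ i, U 0 i a * U 0 i b = 0) ∧
      (∀ a : Fin 3, (fun k => V 0 k a) ≠ 0) ∧
      (∀ a b : Fin 3, a ≠ b → ∑ k, V 0 k a * V 0 k b = 0) := by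
  rintro ⟨O, U, S, V, hO, hU, hS, hV, hJ, hdiag, hrank, -, -, -, -⟩
  have h0 : (0 : Fin 3 → ℝ) ∈ O := mem_of_mem_nhds hO
  have hS₁ : S 0 1 1 = 0 := hrank 0 h0 1 J17_zero_rank_le_one
  have hJ_apply : ∀ x ∈ O, ∀ i j,
      J17 x i j = U x i 0 * S x 0 0 * V x j 0 + U x i 1 * S x 1 1 * V x j 1 := fun x hx i j => by
    rw [hJ x hx, mul_mul_transpose_apply_of_isDiag (fun i j => hdiag x hx i j)
      (hrank x hx 2 (J17_rank_le_two x))]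
  obtain ⟨hV₀, hV₁, hU₀⟩ := J17_zero_factors_of_eq_vecMulVec (u := fun i => U 0 i 0 * S 0 0 0)
    (v := fun j => V 0 j 0) fun i j => by simpa [hS₁] using hJ_apply 0 h0 i j
  set q₀ := fun x => (U x 0 0 - U x 1 0) * S x 0 0
  set q₁ := fun x => (U x 0 1 - U x 1 1) * S x 1 1
  have hq₀ : q₀ 0 = 0 := by simp only [q₀, sub_mul, sub_eq_zero]; exact hU₀
  have hq₁ : q₁ 0 = 0 := by simp only [q₁, hS₁, mul_zero]
  have dU i j := (hU i j).differentiableAt hO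
  have dS i j := (hS i j).differentiableAt hO
  have dV i j := (hV i j).differentiableAt hO
  have hderiv : ∀ j m, (∀ x ∈ O, J17 x 0 j - J17 x 1 j = 2 * x m) → V 0 j 0 = 0 →
      (2 : ℝ) • ContinuousLinearMap.proj m = V 0 j 1 • fderiv ℝ q₁ 0 := by
    intro j m hm hVj
    have hq := hasFDerivAt_mul_add_mul_of_eq_zero (a₀ := q₀) (a₁ := q₁) (((dU 0 0).sub (dU 1 0)).mul (dS 0 0))
      (dV j 0) (((dU 0 1).sub (dU 1 1)).mul (dS 1 1)) (dV j 1) hq₀ hVj hq₁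
    refine ((hasFDerivAt_apply m 0).const_mul 2).unique (hq.congr_of_eventuallyEq ?_)
    filter_upwards [hO] with x hx
    rw [← hm x hx, hJ_apply x hx, hJ_apply x hx]
    simp only [q₀, q₁]
    ring
  exact not_smul_proj_eq_smul_and_smul_proj_eq_smul (by decide : (1 : Fin 3) ≠ 0) two_ne_zero _ _ _
    ⟨hderiv 0 1 (fun x _ => J17_row_sub_apply_zero x) hV₀,
      hderiv 1 0 (fun x _ => J17_row_sub_apply_one x) hV₁⟩
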